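/- arXiv:2602.18879 — 5 statements merged into one kernel-verified Lean document; each statement's English description precedes it below -/
import Mathlib

section
/- For a finite set Y, full-support distribution q, and fixed x ∈ ℝ^Y, the map λ ↦ g_q(x;λ) := −(1/λ)·log(Σ_y q(y)·exp(−λ·x(y))) is weakly decreasing on (0,∞); moreover its derivative with respect to λ equals −(1/λ²)·D_KL(p_{q,λ}‖q), where p_{q,λ}(y) ∝ q(y)·exp(−λ·x(y)). In particular, if x is non-constant, the map is strictly decreasing. -/
/-!
Write `Z(λ) = ∑ q(y) e^{-λ x(y)}` and `p_λ` for the Gibbs distribution, so `g(λ) = -log Z(λ) / λ`.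
Since `(log Z)' = -E_{p_λ}[x]` and `log (p_λ / q) = -λ x - log Z`, the quotient rule gives
`λ² g'(λ) = log Z + λ E_{p_λ}[x] = -D_KL(p_λ ‖ q)`. Gibbs' inequality makes this derivative
nonpositive, and strictly negative unless `p_λ = q`, which for `λ ≠ 0` forces `x` to be constant.
-/

open Real Finset InformationTheory

section GibbsInequality

variable {ι : Type*} (s : Finset ι) {p q : ι → ℝ}

lemma sum_mul_log_div_eq_sum_mul_klFun (hq : ∀ i ∈ s, q i ≠ 0)
    (hpq : ∑ i ∈ s, p i = ∑ i ∈ s, q i) :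
    ∑ i ∈ s, p i * log (p i / q i) = ∑ i ∈ s, q i * klFun (p i / q i) := by
  have hterm : ∀ i ∈ s, q i * klFun (p i / q i) = p i * log (p i / q i) + (q i - p i) := by
    intro i hi
    rw [klFun_apply]
    field_simp [hq i hi]
    ring
  rw [sum_congr rfl hterm, sum_add_distrib, sum_sub_distrib, hpq, sub_self, add_zero]

lemma sum_mul_log_div_nonneg (hp : ∀ i ∈ s, 0 ≤ p i) (hq : ∀ i ∈ s, 0 < q i)
    (hpq : ∑ i ∈ s, p i = ∑ i ∈ s, q i) :
    0 ≤ ∑ i ∈ s, p i * log (p i / q i) := by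
  rw [sum_mul_log_div_eq_sum_mul_klFun s (fun i hi ↦ (hq i hi).ne') hpq]
  exact sum_nonneg fun i hi ↦
    mul_nonneg (hq i hi).le (klFun_nonneg (div_nonneg (hp i hi) (hq i hi).le))

lemma sum_mul_log_div_pos (hp : ∀ i ∈ s, 0 ≤ p i) (hq : ∀ i ∈ s, 0 < q i)
    (hpq : ∑ i ∈ s, p i = ∑ i ∈ s, q i) (hne : ∃ i ∈ s, p i ≠ q i) :
    0 < ∑ i ∈ s, p i * log (p i / q i) := by
  rw [sum_mul_log_div_eq_sum_mul_klFun s (fun i hi ↦ (hq i hi).ne') hpq]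
  have hratio_nonneg : ∀ i ∈ s, 0 ≤ p i / q i := fun i hi ↦ div_nonneg (hp i hi) (hq i hi).le
  refine sum_pos' (fun i hi ↦ mul_nonneg (hq i hi).le (klFun_nonneg (hratio_nonneg i hi))) ?_
  obtain ⟨i, hi, hpqi⟩ := hne
  refine ⟨i, hi, mul_pos (hq i hi) ((klFun_nonneg (hratio_nonneg i hi)).lt_of_ne' ?_)⟩
  rw [Ne, klFun_eq_zero_iff (hratio_nonneg i hi), div_eq_one_iff_eq (hq i hi).ne']
  exact hpqi

end GibbsInequality

section GibbsDistribution

variable {Y : Type*} [Fintype Y] (q x : Y → ℝ)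

noncomputable def partitionFunction (l : ℝ) : ℝ := ∑ y, q y * exp (-l * x y)

noncomputable def gibbsDist (l : ℝ) (y : Y) : ℝ := q y * exp (-l * x y) / partitionFunction q x l

variable {q}

lemma partitionFunction_pos [Nonempty Y] (hq : ∀ y, 0 < q y) (l : ℝ) :
    0 < partitionFunction q x l :=
  sum_pos (fun y _ ↦ mul_pos (hq y) (exp_pos _)) univ_nonempty

lemma sum_gibbsDist [Nonempty Y] (hq : ∀ y, 0 < q y) (l : ℝ) : ∑ y, gibbsDist q x l y = 1 := by
  unfold gibbsDist
  rw [← sum_div]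
  exact div_self (partitionFunction_pos x hq l).ne'

lemma gibbsDist_pos [Nonempty Y] (hq : ∀ y, 0 < q y) (l : ℝ) (y : Y) : 0 < gibbsDist q x l y :=
  div_pos (mul_pos (hq y) (exp_pos _)) (partitionFunction_pos x hq l)

lemma sum_gibbsDist_mul_log_div [Nonempty Y] (hq : ∀ y, 0 < q y) (l : ℝ) :
    ∑ y, gibbsDist q x l y * log (gibbsDist q x l y / q y)
      = -l * ∑ y, gibbsDist q x l y * x y - log (partitionFunction q x l) := by
  have hZ := (partitionFunction_pos x hq l).ne'
  have hlog : ∀ y, log (gibbsDist q x l y / q y) = -l * x y - log (partitionFunction q x l) := by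
    intro y
    have hratio : gibbsDist q x l y / q y = exp (-l * x y) / partitionFunction q x l := by
      rw [gibbsDist]
      field_simp [(hq y).ne']
    rw [hratio, log_div (exp_ne_zero _) hZ, log_exp]
  simp only [hlog, mul_sub, sum_sub_distrib, ← sum_mul, sum_gibbsDist x hq, one_mul, mul_sum]
  congr 1
  exact sum_congr rfl fun y _ ↦ by ring

lemma exists_gibbsDist_ne [Nonempty Y] (hq : ∀ y, 0 < q y) {l : ℝ} (hl : l ≠ 0)
    {y z : Y} (hyz : x y ≠ x z) : ∃ w, gibbsDist q x l w ≠ q w := by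
  by_contra! h
  have hexp : ∀ w, exp (-l * x w) = partitionFunction q x l := by
    intro w
    have hw := h w
    rw [gibbsDist, div_eq_iff (partitionFunction_pos x hq l).ne'] at hw
    exact mul_left_cancel₀ (hq w).ne' hw
  have hxyz : -l * x y = -l * x z := exp_injective ((hexp y).trans (hexp z).symm)
  exact hyz (mul_left_cancel₀ (neg_ne_zero.mpr hl) hxyz)

lemma hasDerivAt_partitionFunction (l : ℝ) :
    HasDerivAt (partitionFunction q x) (-∑ y, q y * exp (-l * x y) * x y) l := by
  rw [← sum_neg_distrib]
  refine HasDerivAt.fun_sum fun y _ ↦ ?_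
  have hlin : HasDerivAt (fun l : ℝ ↦ -l * x y) (-x y) l := by
    simpa using (hasDerivAt_neg l).mul_const (x y)
  exact (hlin.exp.const_mul (q y)).congr_deriv (by ring)

lemma hasDerivAt_log_partitionFunction [Nonempty Y] (hq : ∀ y, 0 < q y) (l : ℝ) :
    HasDerivAt (fun l ↦ log (partitionFunction q x l)) (-∑ y, gibbsDist q x l y * x y) l := by
  refine ((hasDerivAt_partitionFunction x l).log (partitionFunction_pos x hq l).ne').congr_deriv ?_
  simp only [gibbsDist, neg_div, sum_div]
  congr 1
  exact sum_congr rfl fun y _ ↦ by ring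

end GibbsDistribution

lemma antitoneOn_of_hasDerivAt_nonpos {D : Set ℝ} (hD : Convex ℝ D) (hDo : IsOpen D)
    {f f' : ℝ → ℝ} (hf : ∀ x ∈ D, HasDerivAt f (f' x) x) (hf' : ∀ x ∈ D, f' x ≤ 0) :
    AntitoneOn f D :=
  antitoneOn_of_hasDerivWithinAt_nonpos hD (fun x hx ↦ (hf x hx).continuousAt.continuousWithinAt)
    (by simpa only [hDo.interior_eq] using fun x hx ↦ (hf x hx).hasDerivWithinAt)
    (by simpa only [hDo.interior_eq] using hf')

lemma strictAntiOn_of_hasDerivAt_neg {D : Set ℝ} (hD : Convex ℝ D) (hDo : IsOpen D)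
    {f f' : ℝ → ℝ} (hf : ∀ x ∈ D, HasDerivAt f (f' x) x) (hf' : ∀ x ∈ D, f' x < 0) :
    StrictAntiOn f D :=
  strictAntiOn_of_hasDerivWithinAt_neg hD (fun x hx ↦ (hf x hx).continuousAt.continuousWithinAt)
    (by simpa only [hDo.interior_eq] using fun x hx ↦ (hf x hx).hasDerivWithinAt)
    (by simpa only [hDo.interior_eq] using hf')

theorem entropic_certainty_equivalent_antitone_in_lambda_general
    {Y : Type*} [Fintype Y] [Nonempty Y]
    (q : Y → ℝ) (hq_pos : ∀ y, 0 < q y) (hq_sum : ∑ y, q y = 1)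
    (x : Y → ℝ) :
    let g : ℝ → ℝ := fun l => -(1 / l) * Real.log (∑ y, q y * Real.exp (-l * x y))
    let p : ℝ → Y → ℝ := fun l y =>
      q y * Real.exp (-l * x y) / ∑ z, q z * Real.exp (-l * x z)
    let KL : ℝ → ℝ := fun l => ∑ y, p l y * Real.log (p l y / q y)
    AntitoneOn g (Set.Ioi 0) ∧
      (∀ l : ℝ, 0 < l → HasDerivAt g (-(1 / l ^ 2) * KL l) l) ∧
      ((∃ y z : Y, x y ≠ x z) → StrictAntiOn g (Set.Ioi 0)) := by
  intro g p KL
  have hsum : ∀ l, ∑ y, p l y = ∑ y, q y := fun l ↦ (sum_gibbsDist x hq_pos l).trans hq_sum.symm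
  have hp_nonneg : ∀ l y, 0 ≤ p l y := fun l y ↦ (gibbsDist_pos x hq_pos l y).le
  have hderiv : ∀ l : ℝ, 0 < l → HasDerivAt g (-(1 / l ^ 2) * KL l) l := by
    intro l hl
    have hinv : HasDerivAt (fun l : ℝ ↦ -(1 / l)) (1 / l ^ 2) l := by
      simpa [one_div] using (hasDerivAt_inv hl.ne').fun_neg
    refine (hinv.mul (hasDerivAt_log_partitionFunction x hq_pos l)).congr_deriv ?_
    rw [show KL l = _ from sum_gibbsDist_mul_log_div x hq_pos l]
    field_simp
    ring
  refine ⟨antitoneOn_of_hasDerivAt_nonpos (convex_Ioi 0) isOpen_Ioi hderiv fun l _ ↦ ?_,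
    hderiv, fun ⟨y, z, hyz⟩ ↦ strictAntiOn_of_hasDerivAt_neg (convex_Ioi 0) isOpen_Ioi hderiv
      fun l hl ↦ ?_⟩
  · exact mul_nonpos_of_nonpos_of_nonneg (neg_nonpos.mpr (by positivity))
      (sum_mul_log_div_nonneg _ (fun y _ ↦ hp_nonneg l y) (fun y _ ↦ hq_pos y) (hsum l))
  · obtain ⟨w, hw⟩ := exists_gibbsDist_ne x hq_pos (Set.mem_Ioi.mp hl).ne' hyz
    exact mul_neg_of_neg_of_pos (neg_neg_of_pos (one_div_pos.mpr (pow_pos hl 2)))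
      (sum_mul_log_div_pos _ (fun y _ ↦ hp_nonneg l y) (fun y _ ↦ hq_pos y) (hsum l)
        ⟨w, mem_univ w, hw⟩)

/-- the map `λ ↦ g_q(x;λ)` is weakly decreasing on `(0,∞)`, its
derivative equals `−(1/λ²)·D_KL(p_{q,λ}‖q)` where `p_{q,λ}(y) ∝ q(y)·exp(−λ·x(y))`,
and it is strictly decreasing when `x` is non-constant. -/
theorem entropic_certainty_equivalent_antitone_in_lambda
    {Y : Type*} [Fintype Y] [Nonempty Y] (hY : 2 ≤ Fintype.card Y)
    (q : Y → ℝ) (hq_pos : ∀ y, 0 < q y) (hq_sum : ∑ y, q y = 1)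
    (x : Y → ℝ) :
    let g : ℝ → ℝ := fun l => -(1 / l) * Real.log (∑ y, q y * Real.exp (-l * x y))
    let p : ℝ → Y → ℝ := fun l y =>
      q y * Real.exp (-l * x y) / ∑ z, q z * Real.exp (-l * x z)
    let KL : ℝ → ℝ := fun l => ∑ y, p l y * Real.log (p l y / q y)
    AntitoneOn g (Set.Ioi 0) ∧
      (∀ l : ℝ, 0 < l → HasDerivAt g (-(1 / l ^ 2) * KL l) l) ∧
      ((∃ y z : Y, x y ≠ x z) → StrictAntiOn g (Set.Ioi 0)) :=
  entropic_certainty_equivalent_antitone_in_lambda_general q hq_pos hq_sum x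
end

section
/- Two-point supremum lemma: let Y = {0,1}, let q(α) and q(β) be Bernoulli distributions on Y with success probabilities α, β ∈ (0,1), and fix λ > 0. Then the supremum over x : Y → ℝ of g_{q(α)}(x;λ) − g_{q(β)}(x;λ) equals (1/λ)·log(max{β/α, (1−β)/(1−α)}). -/
open Filter Real

private lemma aux_tendsto {f g : ℕ → ℝ} {p p' l : ℝ} (hp : 0 < p) (hp' : 0 < p')
    (hl : 0 < l) (hf : Tendsto f atTop (nhds p)) (hg : Tendsto g atTop (nhds p')) :
    Tendsto (fun n => (-(1/l) * Real.log (f n)) - (-(1/l) * Real.log (g n))) atTop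
      (nhds ((1/l) * Real.log (p'/p))) := by
  have h1 : Tendsto (fun n => Real.log (f n)) atTop (nhds (Real.log p)) :=
    (Real.continuousAt_log hp.ne').tendsto.comp hf
  have h2 : Tendsto (fun n => Real.log (g n)) atTop (nhds (Real.log p')) :=
    (Real.continuousAt_log hp'.ne').tendsto.comp hg
  have := (h1.const_mul (-(1/l))).sub (h2.const_mul (-(1/l)))
  have heq : (1/l) * Real.log (p'/p) = -(1/l) * Real.log p - -(1/l) * Real.log p' := by
    rw [Real.log_div hp'.ne' hp.ne']; ring
  rw [heq]
  exact this

private lemma exp_seq_tendsto {l : ℝ} (hl : 0 < l) :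
    Tendsto (fun n : ℕ => Real.exp (-l * n)) atTop (nhds 0) := by
  apply Real.tendsto_exp_atBot.comp
  have h : Tendsto (fun n : ℕ => l * (n : ℝ)) atTop atTop :=
    (tendsto_natCast_atTop_atTop).const_mul_atTop hl
  have := tendsto_neg_atTop_atBot.comp h
  simpa [Function.comp_def, neg_mul] using this

/-- two-point supremum lemma: for Bernoulli models with success
probabilities `α, β ∈ (0,1)` and `λ > 0`,
`sup_x (g_{q(α)}(x;λ) − g_{q(β)}(x;λ)) = (1/λ)·log(max{β/α, (1−β)/(1−α)})`. -/
theorem two_point_supremum (α β l : ℝ)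
    (hα : α ∈ Set.Ioo (0:ℝ) 1) (hβ : β ∈ Set.Ioo (0:ℝ) 1) (hl : 0 < l) :
    IsLUB (Set.range fun x : Fin 2 → ℝ =>
        (-(1 / l) * Real.log (α * Real.exp (-l * x 1) + (1 - α) * Real.exp (-l * x 0))) -
          (-(1 / l) * Real.log (β * Real.exp (-l * x 1) + (1 - β) * Real.exp (-l * x 0))))
      ((1 / l) * Real.log (max (β / α) ((1 - β) / (1 - α)))) := by
  obtain ⟨hα0, hα1⟩ := hα
  obtain ⟨hβ0, hβ1⟩ := hβ
  have hα1' : 0 < 1 - α := by linarith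
  have hβ1' : 0 < 1 - β := by linarith
  set M : ℝ := max (β / α) ((1 - β) / (1 - α)) with hM
  have hM0 : 0 < M := lt_of_lt_of_le (div_pos hβ0 hα0) (le_max_left _ _)
  have hβM : β ≤ M * α := by
    have := le_max_left (β / α) ((1 - β) / (1 - α))
    calc β = (β / α) * α := by field_simp
    _ ≤ M * α := by nlinarith
  have hβM' : 1 - β ≤ M * (1 - α) := by
    have := le_max_right (β / α) ((1 - β) / (1 - α))
    calc 1 - β = ((1 - β) / (1 - α)) * (1 - α) := by field_simp
    _ ≤ M * (1 - α) := by nlinarith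
  constructor
  · -- upper bound
    rintro _ ⟨x, rfl⟩
    set u := Real.exp (-l * x 1) with hu_def
    set v := Real.exp (-l * x 0) with hv_def
    have hu : 0 < u := Real.exp_pos _
    have hv : 0 < v := Real.exp_pos _
    have hA : 0 < α * u + (1 - α) * v := by positivity
    have hB : 0 < β * u + (1 - β) * v := by positivity
    have hle : β * u + (1 - β) * v ≤ M * (α * u + (1 - α) * v) := by
      nlinarith [mul_le_mul_of_nonneg_right hβM hu.le,
        mul_le_mul_of_nonneg_right hβM' hv.le]
    have hlog : Real.log (β * u + (1 - β) * v) - Real.log (α * u + (1 - α) * v)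
        ≤ Real.log M := by
      rw [← Real.log_div hB.ne' hA.ne']
      exact Real.log_le_log (div_pos hB hA) ((div_le_iff₀ hA).mpr (by linarith))
    have hl' : (0:ℝ) ≤ 1 / l := by positivity
    nlinarith [mul_le_mul_of_nonneg_left hlog hl']
  · -- least upper bound
    rintro b hb
    have hv0 := exp_seq_tendsto hl
    rcases le_total ((1 - β) / (1 - α)) (β / α) with h | h
    · -- M = β/α, take x = ![n, 0]
      have hMeq : M = β / α := max_eq_left h
      have hfA : Tendsto (fun n : ℕ => α * 1 + (1 - α) * Real.exp (-l * n)) atTop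
          (nhds α) := by
        have := (tendsto_const_nhds (x := α * 1)).add (hv0.const_mul (1 - α))
        simpa using this
      have hfB : Tendsto (fun n : ℕ => β * 1 + (1 - β) * Real.exp (-l * n)) atTop
          (nhds β) := by
        have := (tendsto_const_nhds (x := β * 1)).add (hv0.const_mul (1 - β))
        simpa using this
      have hlim := aux_tendsto hα0 hβ0 hl hfA hfB
      rw [hMeq]
      refine le_of_tendsto' hlim ?_
      intro n
      have := hb (Set.mem_range_self (f := fun x : Fin 2 → ℝ =>
        (-(1 / l) * Real.log (α * Real.exp (-l * x 1) + (1 - α) * Real.exp (-l * x 0))) -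
          (-(1 / l) * Real.log (β * Real.exp (-l * x 1) + (1 - β) * Real.exp (-l * x 0))))
        ![(n : ℝ), 0])
      simpa using this
    · -- M = (1-β)/(1-α), take x = ![0, n]
      have hMeq : M = (1 - β) / (1 - α) := max_eq_right h
      have hfA : Tendsto (fun n : ℕ => α * Real.exp (-l * n) + (1 - α) * 1) atTop
          (nhds (1 - α)) := by
        have := (hv0.const_mul α).add (tendsto_const_nhds (x := (1 - α) * 1))
        simpa using this
      have hfB : Tendsto (fun n : ℕ => β * Real.exp (-l * n) + (1 - β) * 1) atTop
          (nhds (1 - β)) := by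
        have := (hv0.const_mul β).add (tendsto_const_nhds (x := (1 - β) * 1))
        simpa using this
      have hlim := aux_tendsto hα1' hβ1' hl hfA hfB
      rw [hMeq]
      refine le_of_tendsto' hlim ?_
      intro n
      have := hb (Set.mem_range_self (f := fun x : Fin 2 → ℝ =>
        (-(1 / l) * Real.log (α * Real.exp (-l * x 1) + (1 - α) * Real.exp (-l * x 0))) -
          (-(1 / l) * Real.log (β * Real.exp (-l * x 1) + (1 - β) * Real.exp (-l * x 0))))
        ![0, (n : ℝ)])
      simpa using this
end

section
/- No linear contract can implement the high action in the three-outcome example: let Y = {0,1,2}, let q^L = (0.05, 0.90, 0.05), q¹_H = (0.30, 0.40, 0.30), q²_H = (0.45, 0.10, 0.45) be distributions on Y (written as probabilities of outcomes 0,1,2), and fix λ > 0. For a linear contract x(y) = α + β·y with α, β ∈ ℝ, define F_H(x) := −(1/λ)·(½·log M_{q¹_H}(β) + ½·log M_{q²_H}(β)) − 1 and F_L(x) := −(1/λ)·log M_{q^L}(β), where M_q(β) := q(0) + q(1)·e^{−λβ} + q(2)·e^{−2λβ}. Then F_H(x) − F_L(x) ≤ −1 for all α, β ∈ ℝ. 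-/
/-- no linear contract can implement the high action in the
three-outcome example: with `q^L = (0.05, 0.90, 0.05)`, `q¹_H = (0.30, 0.40, 0.30)`,
`q²_H = (0.45, 0.10, 0.45)` and `λ > 0`, for every linear contract `x(y) = α + β·y`
we have `F_H(x) − F_L(x) ≤ −1`. -/
theorem no_linear_contract_three_outcomes (l : ℝ) (hl : 0 < l) (α β : ℝ) :
    let M : (Fin 3 → ℝ) → ℝ := fun q =>
      q 0 + q 1 * Real.exp (-l * β) + q 2 * Real.exp (-2 * l * β)
    let qL : Fin 3 → ℝ := ![0.05, 0.90, 0.05]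
    let qH1 : Fin 3 → ℝ := ![0.30, 0.40, 0.30]
    let qH2 : Fin 3 → ℝ := ![0.45, 0.10, 0.45]
    let FH : ℝ := -(1 / l) * ((1 / 2) * Real.log (M qH1) + (1 / 2) * Real.log (M qH2)) - 1
    let FL : ℝ := -(1 / l) * Real.log (M qL)
    FH - FL ≤ -1 := by
  intro M qL qH1 qH2 FH FL
  have ht : (0:ℝ) < Real.exp (-l * β) := Real.exp_pos _
  set t := Real.exp (-l * β) with htdef
  have e1 : Real.exp (-(l * β)) = t := by rw [htdef]; ring_nf
  have e2 : Real.exp (-(2 * l * β)) = t ^ 2 := by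
    rw [htdef, ← Real.exp_nat_mul]; ring_nf
  have hML : M qL = 0.05 + 0.90 * t + 0.05 * t ^ 2 := by
    simp [M, qL, e1, e2]
  have hM1 : M qH1 = 0.30 + 0.40 * t + 0.30 * t ^ 2 := by
    simp [M, qH1, e1, e2]
  have hM2 : M qH2 = 0.45 + 0.10 * t + 0.45 * t ^ 2 := by
    simp [M, qH2, e1, e2]
  have hMLpos : 0 < M qL := by rw [hML]; nlinarith
  have h1 : Real.log (M qL) ≤ Real.log (M qH1) := by
    apply Real.log_le_log hMLpos
    rw [hML, hM1]; nlinarith [sq_nonneg (1 - t)]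
  have h2 : Real.log (M qL) ≤ Real.log (M qH2) := by
    apply Real.log_le_log hMLpos
    rw [hML, hM2]; nlinarith [sq_nonneg (1 - t)]
  have hinv : 0 < 1 / l := by positivity
  show FH - FL ≤ -1
  simp only [FH, FL]
  nlinarith [mul_le_mul_of_nonneg_left h1 hinv.le, mul_le_mul_of_nonneg_left h2 hinv.le]
end

section
/- Incentive capacity lower bound: let Y = {0,1}, let q¹ be Bernoulli(p), q_H Bernoulli(θ_H), q_L Bernoulli(θ_L) with p, θ_L, θ_H ∈ (0,1), let μ put weight m ∈ [0,1] on q_H and 1−m on q_L, and fix λ > 0. Define M(μ,λ;x) := m·g_{q_H}(x;λ) + (1−m)·g_{q_L}(x;λ) − g_{q¹}(x;λ) and C(μ,λ) := sup_{x : Y → ℝ} M(μ,λ;x). Then C(μ,λ) ≥ (1/λ)·(m·log(p/θ_H) + (1−m)·log(p/θ_L)). -/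
open Real Filter Topology

/-- incentive capacity lower bound:
`C(μ,λ) = sup_x M(μ,λ;x) ≥ (1/λ)·(m·log(p/θ_H) + (1−m)·log(p/θ_L))`. -/
theorem incentive_capacity_lower_bound (p θH θL m l : ℝ)
    (hp : p ∈ Set.Ioo (0:ℝ) 1) (hH : θH ∈ Set.Ioo (0:ℝ) 1) (hL : θL ∈ Set.Ioo (0:ℝ) 1)
    (hm : m ∈ Set.Icc (0:ℝ) 1) (hl : 0 < l) :
    let g : ℝ → (Fin 2 → ℝ) → ℝ := fun θ x =>
      -(1 / l) * Real.log (θ * Real.exp (-l * x 1) + (1 - θ) * Real.exp (-l * x 0))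
    let M : (Fin 2 → ℝ) → ℝ := fun x => m * g θH x + (1 - m) * g θL x - g p x
    (1 / l) * (m * Real.log (p / θH) + (1 - m) * Real.log (p / θL)) ≤ ⨆ x, M x := by
  obtain ⟨hp0, hp1⟩ := hp
  obtain ⟨hH0, hH1⟩ := hH
  obtain ⟨hL0, hL1⟩ := hL
  obtain ⟨hm0, hm1⟩ := hm
  intro g M
  have hgx : ∀ θ (x : Fin 2 → ℝ), g θ x
      = -(1/l) * Real.log (θ * Real.exp (-l * x 1) + (1-θ) * Real.exp (-l * x 0)) :=
    fun _ _ => rfl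
  have hMx : ∀ x, M x = m * g θH x + (1-m) * g θL x - g p x := fun _ => rfl
  have hl' : (0:ℝ) ≤ 1 / l := by positivity
  have hm1' : (0:ℝ) ≤ 1 - m := by linarith
  -- general log comparison bound
  have hbound : ∀ (θ : ℝ), 0 < θ → θ < 1 → ∀ A B : ℝ, 0 < A → 0 < B →
      Real.log (p*A + (1-p)*B)
        ≤ Real.log (max (p/θ) ((1-p)/(1-θ))) + Real.log (θ*A + (1-θ)*B) := by
    intro θ hθ0 hθ1 A B hA hB
    have h1θ : (0:ℝ) < 1 - θ := by linarith
    have hK0 : 0 < max (p/θ) ((1-p)/(1-θ)) := lt_max_of_lt_left (by positivity)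
    have hS : 0 < θ*A + (1-θ)*B := by nlinarith [mul_pos hθ0 hA, mul_pos h1θ hB]
    have h1 : p ≤ max (p/θ) ((1-p)/(1-θ)) * θ :=
      (div_le_iff₀ hθ0).mp (le_max_left _ _)
    have h2 : 1 - p ≤ max (p/θ) ((1-p)/(1-θ)) * (1-θ) :=
      (div_le_iff₀ h1θ).mp (le_max_right _ _)
    have hle : p*A + (1-p)*B ≤ max (p/θ) ((1-p)/(1-θ)) * (θ*A + (1-θ)*B) := by
      nlinarith [mul_le_mul_of_nonneg_right h1 hA.le, mul_le_mul_of_nonneg_right h2 hB.le]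
    calc Real.log (p*A + (1-p)*B)
        ≤ Real.log (max (p/θ) ((1-p)/(1-θ)) * (θ*A + (1-θ)*B)) :=
          Real.log_le_log (by nlinarith [mul_pos hp0 hA, mul_pos (show (0:ℝ) < 1-p by linarith) hB]) hle
      _ = Real.log (max (p/θ) ((1-p)/(1-θ))) + Real.log (θ*A + (1-θ)*B) :=
          Real.log_mul hK0.ne' hS.ne'
  set KH := max (p/θH) ((1-p)/(1-θH)) with hKHdef
  set KL := max (p/θL) ((1-p)/(1-θL)) with hKLdef
  -- upper bound on M
  have hub : ∀ x, M x ≤ (1/l) * (m * Real.log KH + (1-m) * Real.log KL) := by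
    intro x
    set A := Real.exp (-l * x 1) with hAdef
    set B := Real.exp (-l * x 0) with hBdef
    have hA : 0 < A := Real.exp_pos _
    have hB : 0 < B := Real.exp_pos _
    have e1 := hbound θH hH0 hH1 A B hA hB
    have e2 := hbound θL hL0 hL1 A B hA hB
    have key : Real.log (p*A + (1-p)*B) - m * Real.log (θH*A + (1-θH)*B)
        - (1-m) * Real.log (θL*A + (1-θL)*B)
        ≤ m * Real.log KH + (1-m) * Real.log KL := by
      nlinarith [mul_le_mul_of_nonneg_left e1 hm0, mul_le_mul_of_nonneg_left e2 hm1']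
    calc M x = (1/l) * (Real.log (p*A + (1-p)*B) - m * Real.log (θH*A + (1-θH)*B)
          - (1-m) * Real.log (θL*A + (1-θL)*B)) := by
          rw [hMx, hgx, hgx, hgx]; ring
      _ ≤ (1/l) * (m * Real.log KH + (1-m) * Real.log KL) :=
          mul_le_mul_of_nonneg_left key hl'
  have hbdd : BddAbove (Set.range M) := by
    refine ⟨(1/l) * (m * Real.log KH + (1-m) * Real.log KL), ?_⟩
    rintro _ ⟨x, rfl⟩
    exact hub x
  -- the sequence x_n = (0, -n)
  set u : ℕ → ℝ := fun n => Real.exp (-l * n) with hudef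
  have hupos : ∀ n, 0 < u n := fun n => Real.exp_pos _
  set xs : ℕ → Fin 2 → ℝ := fun n => ![0, -(n:ℝ)] with hxsdef
  have hg_seq : ∀ (θ : ℝ), 0 < θ → θ < 1 → ∀ n : ℕ,
      g θ (xs n) = -(n:ℝ) - (1/l) * Real.log (θ + (1-θ) * u n) := by
    intro θ hθ0 hθ1 n
    have h1θ : (0:ℝ) < 1 - θ := by linarith
    have hepos : 0 < θ + (1-θ) * u n := by nlinarith [mul_pos h1θ (hupos n)]
    have hx1 : xs n 1 = -(n:ℝ) := rfl
    have hx0 : xs n 0 = 0 := rfl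
    rw [hgx, hx1, hx0]
    have hprod : θ * Real.exp (-l * -(n:ℝ)) + (1-θ) * Real.exp (-l * 0)
        = Real.exp (l * n) * (θ + (1-θ) * u n) := by
      have h1 : Real.exp (l*n) * u n = 1 := by
        rw [hudef]
        dsimp only
        rw [← Real.exp_add]
        have h0 : l*(n:ℝ) + -l*n = 0 := by ring
        rw [h0, Real.exp_zero]
      have h2 : -l * -(n:ℝ) = l * n := by ring
      rw [h2, mul_zero, Real.exp_zero]
      nlinarith [h1]
    rw [hprod, Real.log_mul (Real.exp_pos _).ne' hepos.ne', Real.log_exp]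
    field_simp
    ring
  have hMn : ∀ n, M (xs n) = -(1/l) * (m * Real.log (θH + (1-θH) * u n)
      + (1-m) * Real.log (θL + (1-θL) * u n) - Real.log (p + (1-p) * u n)) := by
    intro n
    rw [hMx, hg_seq θH hH0 hH1 n, hg_seq θL hL0 hL1 n, hg_seq p hp0 hp1 n]
    ring
  -- limit of u
  have hu0 : Tendsto u atTop (𝓝 0) := by
    have heq : u = fun n : ℕ => Real.exp (-l) ^ n := by
      funext n
      rw [hudef, ← Real.exp_nat_mul]
      ring_nf
    rw [heq]
    exact tendsto_pow_atTop_nhds_zero_of_lt_one (Real.exp_pos _).le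
      (Real.exp_lt_one_iff.mpr (by linarith))
  -- continuity of the limiting function at 0
  set F : ℝ → ℝ := fun v => -(1/l) * (m * Real.log (θH + (1-θH) * v)
      + (1-m) * Real.log (θL + (1-θL) * v) - Real.log (p + (1-p) * v)) with hFdef
  have hcont : ∀ (θ : ℝ), 0 < θ → ContinuousAt (fun v : ℝ => Real.log (θ + (1-θ) * v)) 0 := by
    intro θ hθ0
    apply ContinuousAt.log (by fun_prop)
    simp [hθ0.ne']
  have hcF : ContinuousAt F 0 := by
    apply ContinuousAt.mul continuousAt_const
    exact ((continuousAt_const.mul (hcont θH hH0)).add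
      (continuousAt_const.mul (hcont θL hL0))).sub (hcont p hp0)
  have hT : Tendsto (fun n => M (xs n)) atTop (𝓝 (F 0)) := by
    have := hcF.tendsto.comp hu0
    have heq : F ∘ u = fun n => M (xs n) := by
      funext n
      simp only [Function.comp, hFdef, hMn n]
    rwa [heq] at this
  have hF0 : F 0 = (1/l) * (m * Real.log (p / θH) + (1-m) * Real.log (p / θL)) := by
    rw [hFdef]
    simp only [mul_zero, add_zero]
    rw [Real.log_div hp0.ne' hH0.ne', Real.log_div hp0.ne' hL0.ne']
    ring
  rw [← hF0]
  exact le_of_tendsto' hT (fun n => le_ciSup hbdd (xs n))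
end

section
/- Breakthrough trap upper bound: let 0 < θ_L < p < θ_H < 1, m ∈ (0,1), k > 0, λ_S > 0, and let m_S(θ_L) := m·θ_H / (m·θ_H + (1−m)·θ_L) be the posterior weight on q_H after a success. Define M(x) := m_S(θ_L)·g_{q_H}(x;λ_S) + (1−m_S(θ_L))·g_{q_L}(x;λ_S) − g_{q¹}(x;λ_S) for x : {0,1} → ℝ. Then for every x, M(x) ≤ (1/λ_S)·log((1−p)/(1−θ_H)) + ((1−m_S(θ_L))/λ_S)·log(p/θ_L). Consequently, if (1/λ_S)·log((1−p)/(1−θ_H)) < k, then there exists θ̄_L ∈ (0,p) such that for all θ_L ∈ (0,θ̄_L), sup_x M(x) < k. -/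
/-!
Write `u = exp (-λ x 1)`, `v = exp (-λ x 0)`. If `β ≤ C α` and `1 - β ≤ C (1 - α)`, then
`β u + (1 - β) v ≤ C (α u + (1 - α) v)`, so `g_{q(α)} - g_{q(β)} ≤ (1/λ) log C` uniformly in `x`.
With `C = (1 - p)/(1 - θ_H)` against `q_H` and `C = p/θ_L` against `q_L`, the wedge is the
`m_S`-mixture of these two differences, which gives the pointwise bound. As `θ_L ↓ 0` the weight
`1 - m_S(θ_L)` is `O(θ_L)` while `log (p/θ_L)` grows only logarithmically, so the second term of
the bound vanishes and the bound drops below `k` once `(1/λ) log ((1 - p)/(1 - θ_H)) < k`.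
-/

open Real Filter Topology

/-- `g_q(x; l)` for `q` the Bernoulli distribution with success probability `θ` on `{0, 1}`. -/
noncomputable def caraCertEquiv (l θ : ℝ) (x : Fin 2 → ℝ) : ℝ :=
  -(1 / l) * log (θ * exp (-l * x 1) + (1 - θ) * exp (-l * x 0))

lemma caraCertEquiv_sub_le {l α β C : ℝ} (hl : 0 < l) (hα0 : 0 ≤ α) (hα1 : α ≤ 1)
    (hβ0 : 0 ≤ β) (hβ1 : β ≤ 1) (h1 : β ≤ C * α) (h0 : 1 - β ≤ C * (1 - α))
    (x : Fin 2 → ℝ) :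
    caraCertEquiv l α x - caraCertEquiv l β x ≤ 1 / l * log C := by
  unfold caraCertEquiv
  set u := exp (-l * x 1)
  set v := exp (-l * x 0)
  have hmix : ∀ θ : ℝ, 0 ≤ θ → θ ≤ 1 → 0 < θ * u + (1 - θ) * v := fun θ h0 h1 =>
    convex_Ioi (0 : ℝ) (exp_pos _) (exp_pos _) h0 (sub_nonneg.2 h1) (by ring)
  have hα := hmix α hα0 hα1
  have hβ := hmix β hβ0 hβ1
  have hle : β * u + (1 - β) * v ≤ C * (α * u + (1 - α) * v) := by
    nlinarith [mul_le_mul_of_nonneg_right h1 (exp_pos (-l * x 1)).le,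
      mul_le_mul_of_nonneg_right h0 (exp_pos (-l * x 0)).le]
  have hC : 0 < C := pos_of_mul_pos_left (hβ.trans_le hle) hα.le
  have hlog : log (β * u + (1 - β) * v) ≤ log C + log (α * u + (1 - α) * v) :=
    (log_le_log hβ hle).trans_eq (log_mul hC.ne' hα.ne')
  nlinarith [mul_le_mul_of_nonneg_left hlog (one_div_pos.2 hl).le]

lemma mix_caraCertEquiv_sub_le {l p θH θL w : ℝ} (hl : 0 < l) (hθL : 0 < θL) (hθLp : θL < p)
    (hpH : p < θH) (hH1 : θH < 1) (hw0 : 0 ≤ w) (hw1 : w ≤ 1) (x : Fin 2 → ℝ) :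
    w * caraCertEquiv l θH x + (1 - w) * caraCertEquiv l θL x - caraCertEquiv l p x ≤
      1 / l * log ((1 - p) / (1 - θH)) + (1 - w) / l * log (p / θL) := by
  have hH : caraCertEquiv l θH x - caraCertEquiv l p x ≤ 1 / l * log ((1 - p) / (1 - θH)) := by
    refine caraCertEquiv_sub_le hl (by linarith) hH1.le (by linarith) (by linarith) ?_ ?_ x
    · rw [div_mul_eq_mul_div, le_div_iff₀ (by linarith)]
      nlinarith
    · rw [div_mul_cancel₀ _ (by linarith)]
  have hL : caraCertEquiv l θL x - caraCertEquiv l p x ≤ 1 / l * log (p / θL) := by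
    refine caraCertEquiv_sub_le hl hθL.le (by linarith) (by linarith) (by linarith) ?_ ?_ x
    · rw [div_mul_cancel₀ _ hθL.ne']
    · rw [div_mul_eq_mul_div, le_div_iff₀ hθL]
      nlinarith
  have hA : 0 ≤ 1 / l * log ((1 - p) / (1 - θH)) :=
    mul_nonneg (one_div_pos.2 hl).le
      (log_nonneg ((one_le_div (by linarith)).2 (by linarith)))
  rw [show (1 - w) / l * log (p / θL) = (1 - w) * (1 / l * log (p / θL)) by ring]
  nlinarith [mul_le_mul_of_nonneg_left hH hw0, mul_le_mul_of_nonneg_left hL (sub_nonneg.2 hw1),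
    mul_le_mul_of_nonneg_right hw1 hA]

lemma tendsto_mul_log_div_nhdsGT_zero {p : ℝ} (hp : p ≠ 0) :
    Tendsto (fun θ => θ * log (p / θ)) (𝓝[>] 0) (𝓝 0) := by
  have hcont : Continuous fun θ : ℝ => θ * log p - θ * log θ :=
    (continuous_id.mul continuous_const).sub continuous_mul_log
  have h0 : Tendsto (fun θ : ℝ => θ * log p - θ * log θ) (𝓝[>] 0) (𝓝 (0 * log p - 0 * log 0)) :=
    (hcont.tendsto 0).mono_left nhdsWithin_le_nhds
  rw [zero_mul, zero_mul, sub_zero] at h0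
  refine h0.congr' (eventually_nhdsWithin_of_forall fun θ (hθ : 0 < θ) => ?_)
  dsimp only
  rw [log_div hp hθ.ne']
  ring

lemma tendsto_one_sub_div_mul_log_div_nhdsGT_zero {a b p : ℝ} (ha : 0 < a) (hb : 0 ≤ b)
    (hp : p ≠ 0) :
    Tendsto (fun θ => (1 - a / (a + b * θ)) * log (p / θ)) (𝓝[>] 0) (𝓝 0) := by
  have hw : Tendsto (fun θ => b / (a + b * θ)) (𝓝[>] 0) (𝓝 (b / (a + b * 0))) :=
    (tendsto_const_nhds.div ((continuous_const.add (continuous_const.mul continuous_id)).tendsto 0)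
      (by simpa using ha.ne')).mono_left nhdsWithin_le_nhds
  have h := hw.mul (tendsto_mul_log_div_nhdsGT_zero hp)
  rw [mul_zero] at h
  refine h.congr' (eventually_nhdsWithin_of_forall fun θ (hθ : 0 < θ) => ?_)
  have hden : a + b * θ ≠ 0 := by positivity
  dsimp only
  rw [one_sub_div hden]
  field_simp
  ring

theorem breakthrough_trap_general (p θH m k lS : ℝ)
    (hp : p ∈ Set.Ioo (0:ℝ) 1) (hH : θH ∈ Set.Ioo (0:ℝ) 1) (hpH : p < θH)
    (hm : m ∈ Set.Ioo (0:ℝ) 1) (hlS : 0 < lS) :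
    let g : ℝ → (Fin 2 → ℝ) → ℝ := fun θ x =>
      -(1 / lS) * Real.log (θ * Real.exp (-lS * x 1) + (1 - θ) * Real.exp (-lS * x 0))
    let mS : ℝ → ℝ := fun θL => m * θH / (m * θH + (1 - m) * θL)
    let M : ℝ → (Fin 2 → ℝ) → ℝ := fun θL x =>
      mS θL * g θH x + (1 - mS θL) * g θL x - g p x
    (∀ θL : ℝ, 0 < θL → θL < p → ∀ x : Fin 2 → ℝ,
        M θL x ≤ (1 / lS) * Real.log ((1 - p) / (1 - θH)) +
          ((1 - mS θL) / lS) * Real.log (p / θL)) ∧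
      ((1 / lS) * Real.log ((1 - p) / (1 - θH)) < k →
        ∃ θbar : ℝ, 0 < θbar ∧ θbar < p ∧
          ∀ θL : ℝ, 0 < θL → θL < θbar → (⨆ x : Fin 2 → ℝ, M θL x) < k) := by
  obtain ⟨hp0, hp1⟩ := hp
  obtain ⟨hH0, hH1⟩ := hH
  obtain ⟨hm0, hm1⟩ := hm
  intro g mS M
  have hmH : 0 < m * θH := mul_pos hm0 hH0
  have bound : ∀ θL : ℝ, 0 < θL → θL < p → ∀ x : Fin 2 → ℝ,
      M θL x ≤ 1 / lS * log ((1 - p) / (1 - θH)) + (1 - mS θL) / lS * log (p / θL) := by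
    intro θL hθL hθLp x
    have hden : 0 < m * θH + (1 - m) * θL := by nlinarith
    exact mix_caraCertEquiv_sub_le hlS hθL hθLp hpH hH1 (div_pos hmH hden).le
      ((div_le_one hden).2 (by nlinarith)) x
  refine ⟨bound, fun hk => ?_⟩
  have hlim : Tendsto (fun θL => 1 / lS * log ((1 - p) / (1 - θH)) +
      (1 - mS θL) / lS * log (p / θL)) (𝓝[>] 0) (𝓝 (1 / lS * log ((1 - p) / (1 - θH)))) := by
    have h := (tendsto_one_sub_div_mul_log_div_nhdsGT_zero hmH (sub_nonneg.2 hm1.le)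
      hp0.ne').div_const lS
    rw [zero_div] at h
    simpa only [add_zero, div_mul_eq_mul_div] using tendsto_const_nhds.add h
  obtain ⟨δ, hδ, hsmall⟩ := mem_nhdsGT_iff_exists_Ioo_subset.1 (hlim.eventually (gt_mem_nhds hk))
  refine ⟨min δ (p / 2), lt_min hδ (half_pos hp0), (min_le_right _ _).trans_lt (half_lt_self hp0),
    fun θL hθL hθLδ => ?_⟩
  have hθLp : θL < p := hθLδ.trans_le ((min_le_right _ _).trans (half_le_self hp0.le))
  exact (ciSup_le (bound θL hθL hθLp)).trans_lt
    (hsmall ⟨hθL, hθLδ.trans_le (min_le_left _ _)⟩)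

/-- breakthrough trap upper bound: with post-success posterior weight
`m_S(θ_L) = m·θ_H/(m·θ_H + (1−m)·θ_L)`, the post-success incentive wedge satisfies
`M(x) ≤ (1/λ_S)·log((1−p)/(1−θ_H)) + ((1−m_S(θ_L))/λ_S)·log(p/θ_L)` for all `x`,
and if `(1/λ_S)·log((1−p)/(1−θ_H)) < k` then there is `θ̄_L ∈ (0,p)` such that for
all `θ_L ∈ (0,θ̄_L)`, `sup_x M(x) < k`. -/
theorem breakthrough_trap (p θH m k lS : ℝ)
    (hp : p ∈ Set.Ioo (0:ℝ) 1) (hH : θH ∈ Set.Ioo (0:ℝ) 1) (hpH : p < θH)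
    (hm : m ∈ Set.Ioo (0:ℝ) 1) (hk : 0 < k) (hlS : 0 < lS) :
    let g : ℝ → (Fin 2 → ℝ) → ℝ := fun θ x =>
      -(1 / lS) * Real.log (θ * Real.exp (-lS * x 1) + (1 - θ) * Real.exp (-lS * x 0))
    let mS : ℝ → ℝ := fun θL => m * θH / (m * θH + (1 - m) * θL)
    let M : ℝ → (Fin 2 → ℝ) → ℝ := fun θL x =>
      mS θL * g θH x + (1 - mS θL) * g θL x - g p x
    (∀ θL : ℝ, 0 < θL → θL < p → ∀ x : Fin 2 → ℝ,
        M θL x ≤ (1 / lS) * Real.log ((1 - p) / (1 - θH)) +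
          ((1 - mS θL) / lS) * Real.log (p / θL)) ∧
      ((1 / lS) * Real.log ((1 - p) / (1 - θH)) < k →
        ∃ θbar : ℝ, 0 < θbar ∧ θbar < p ∧
          ∀ θL : ℝ, 0 < θL → θL < θbar → (⨆ x : Fin 2 → ℝ, M θL x) < k) :=
  breakthrough_trap_general p θH m k lS hp hH hpH hm hlS
end
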